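/- Let w ∈ S_n be an involution different from the identity. Then at least one of the following holds: (i) there exists an involution w' ∈ S_n with w' < w in the Bruhat order, inv(w') = inv(w) − 1, and ℓ_θ(w') = ℓ_θ(w) − 1; or (ii) there exist an involution w' ∈ S_n and an element s ∈ S_n with w' < s < w in the Bruhat order, inv(w') = inv(s) − 1 = inv(w) − 2, and ℓ_θ(w') = ℓ_θ(w) − 1. -/

import Mathlib

/-!
Take an adjacent descent `s = (i i+1)` of `w`, i.e. `w (i+1) < w i`. If `w` exchanges `i` and
`i+1`, then `w s` is an involution covered by `w` with one excedance fewer. Otherwise the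
conjugate `s w s` is an involution two Bruhat steps below `w` (through `w s`); since `s`
preserves the relative order of every pair other than `{i, i+1}`, conjugation by `s` keeps the
number of excedances. Either way `inv + exc` drops by two, so the θ-length drops by one.
-/

/-- Number of inversions of a permutation of `Fin n`: pairs `i < j` with `w i > w j`. -/
def invNum {n : ℕ} (w : Equiv.Perm (Fin n)) : ℕ :=
  (Finset.univ.filter fun p : Fin n × Fin n => p.1 < p.2 ∧ w p.2 < w p.1).card

/-- Number of excedances of a permutation of `Fin n`: indices `i` with `w i > i`. -/
def excNum {n : ℕ} (w : Equiv.Perm (Fin n)) : ℕ :=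
  (Finset.univ.filter fun i : Fin n => i < w i).card

/-- The θ-length of an involution: `(inv w + exc w) / 2`. -/
def thetaLength {n : ℕ} (w : Equiv.Perm (Fin n)) : ℕ := (invNum w + excNum w) / 2

/-- The Bruhat order on `S_n`, via the rank-matrix characterization:
`u ≤ v` iff for all `i, j`, `#{a ≤ i : u a ≥ j} ≤ #{a ≤ i : v a ≥ j}`. -/
def bruhatLE {n : ℕ} (u v : Equiv.Perm (Fin n)) : Prop :=
  ∀ i j : Fin n,
    (Finset.univ.filter fun a : Fin n => a ≤ i ∧ j ≤ u a).card ≤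
    (Finset.univ.filter fun a : Fin n => a ≤ i ∧ j ≤ v a).card

/-- Strict Bruhat order. -/
def bruhatLT {n : ℕ} (u v : Equiv.Perm (Fin n)) : Prop := bruhatLE u v ∧ u ≠ v

open Equiv Finset

section
variable {n : ℕ} {u w : Perm (Fin n)} {i j p q : Fin n}

lemma swap_apply_lt_swap_apply_iff {x y : Fin n} (hij : (i : ℕ) + 1 = j)
    (h₁ : ¬(x = i ∧ y = j)) (h₂ : ¬(x = j ∧ y = i)) : swap i j x < swap i j y ↔ x < y := by
  rw [swap_apply_def, swap_apply_def]
  split_ifs <;> simp only [Fin.lt_def, Fin.ext_iff, not_and] at * <;> omega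

lemma exists_adjacent_descent (hw : w ≠ 1) : ∃ i j : Fin n, (i : ℕ) + 1 = j ∧ w j < w i := by
  obtain _ | m := n
  · exact absurd (Subsingleton.elim w 1) hw
  by_contra! hasc
  have hmono : StrictMono w := Fin.strictMono_iff_lt_succ.2 fun i =>
    (hasc _ _ rfl).lt_of_ne (w.injective.ne Fin.castSucc_lt_succ.ne)
  have hid : (w : Fin (m + 1) → Fin (m + 1)) = id :=
    (hmono.range_inj strictMono_id).1 (by rw [w.surjective.range_eq, Set.range_id])
  exact hw (Equiv.ext (congrFun hid))

lemma invNum_inv (w : Perm (Fin n)) : invNum w⁻¹ = invNum w := by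
  refine card_nbij' (fun p => (w⁻¹ p.2, w⁻¹ p.1)) (fun p => (w p.2, w p.1)) ?_ ?_ ?_ ?_ <;>
    simp +contextual [Set.MapsTo, Set.LeftInvOn]

lemma invNum_mul_swap_add_one (hij : (i : ℕ) + 1 = j) (hdesc : w j < w i) :
    invNum (w * swap i j) + 1 = invNum w := by
  have hlt : i < j := Fin.lt_def.2 (by omega)
  have hmem : (i, j) ∈ univ.filter fun p : Fin n × Fin n => p.1 < p.2 ∧ w p.2 < w p.1 := by
    simpa using ⟨hlt, hdesc⟩
  unfold invNum
  rw [← card_erase_add_one hmem]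
  congr 1
  refine card_equiv ((swap i j).prodCongr (swap i j)) fun p => ?_
  obtain ⟨a, b⟩ := p
  rw [mem_filter, mem_erase, mem_filter]
  simp only [mem_univ, true_and, Perm.mul_apply, prodCongr_apply, Prod.map, Ne, Prod.ext_iff,
    swap_apply_eq_iff, swap_apply_left, swap_apply_right]
  by_cases h₁ : a = i ∧ b = j
  · obtain ⟨rfl, rfl⟩ := h₁
    simp [hdesc.asymm]
  by_cases h₂ : a = j ∧ b = i
  · obtain ⟨rfl, rfl⟩ := h₂
    simp [hlt.not_gt]
  rw [swap_apply_lt_swap_apply_iff hij h₁ h₂]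
  tauto

lemma invNum_swap_mul_add_one (hij : (i : ℕ) + 1 = j) (hdesc : u⁻¹ j < u⁻¹ i) :
    invNum (swap i j * u) + 1 = invNum u := by
  rw [← invNum_inv, mul_inv_rev, swap_inv, invNum_mul_swap_add_one hij hdesc, invNum_inv]

lemma bruhatLE_mul_swap (hpq : p < q) (hw : w q < w p) : bruhatLE (w * swap p q) w := by
  intro I J
  -- For `p ≤ I < q` the value `w p` among the first `I + 1` positions is replaced by the smaller
  -- `w q`; otherwise `swap p q` permutes these positions.
  by_cases hI : p ≤ I ∧ I < q
  · refine card_le_card fun a ha => ?_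
    simp only [mem_filter, mem_univ, true_and] at ha ⊢
    by_cases hap : a = p
    · subst hap
      rw [Perm.mul_apply, swap_apply_left] at ha
      exact ⟨ha.1, ha.2.trans hw.le⟩
    · have haq : a ≠ q := (ha.1.trans_lt hI.2).ne
      rwa [Perm.mul_apply, swap_apply_of_ne_of_ne hap haq] at ha
  · refine card_le_card_of_injOn (swap p q) (fun a ha => ?_) (swap p q).injective.injOn
    simp only [mem_coe, mem_filter, mem_univ, true_and] at ha ⊢
    rw [Perm.mul_apply] at ha
    refine ⟨?_, ha.2⟩
    rcases eq_or_ne a p with rfl | hap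
    · rw [swap_apply_left]
      exact not_lt.1 fun h => hI ⟨ha.1, h⟩
    rcases eq_or_ne a q with rfl | haq
    · rw [swap_apply_right]
      exact hpq.le.trans ha.1
    · rw [swap_apply_of_ne_of_ne hap haq]
      exact ha.1

lemma bruhatLE_swap_mul (hij : i < j) (hu : u⁻¹ j < u⁻¹ i) : bruhatLE (swap i j * u) u := by
  rw [swap_mul_eq_mul_swap, swap_comm]
  exact bruhatLE_mul_swap hu (by simpa using hij)

lemma bruhatLT_of_bruhatLE_of_invNum_add_one {u v : Perm (Fin n)} (hle : bruhatLE u v)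
    (hinv : invNum u + 1 = invNum v) : bruhatLT u v :=
  ⟨hle, fun h => by subst h; omega⟩

lemma excNum_mul_swap_add_one (hij : i < j) (hi : w i = j) (hj : w j = i) :
    excNum (w * swap i j) + 1 = excNum w := by
  have hmem : i ∈ univ.filter fun a => a < w a := by simpa [hi] using hij
  suffices h : (univ.filter fun a => a < (w * swap i j) a) =
      (univ.filter fun a => a < w a).erase i by
    rw [excNum, excNum, h, card_erase_add_one hmem]
  ext a
  rw [mem_filter, mem_erase, mem_filter, Perm.mul_apply]
  rcases eq_or_ne a i with rfl | hai
  · simp [hj]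
  rcases eq_or_ne a j with rfl | haj
  · simp [hi, hj, hij.not_gt]
  · simp [swap_apply_of_ne_of_ne hai haj, hai]

lemma excNum_swap_mul_mul_swap (hij : (i : ℕ) + 1 = j)
    (hi : w i ≠ j) (hj : w j ≠ i) : excNum (swap i j * (w * swap i j)) = excNum w := by
  refine card_equiv (swap i j) fun a => ?_
  have key := swap_apply_lt_swap_apply_iff hij (x := swap i j a) (y := w (swap i j a))
    (fun h => hi (h.1 ▸ h.2)) (fun h => hj (h.1 ▸ h.2))
  rw [swap_apply_self] at key
  rw [mem_filter, mem_filter]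
  simpa only [mem_univ, true_and, Perm.mul_apply] using key

end

/-- Lemma 6.5: every nonidentity involution `w` of `S_n` admits an involution `w'` strictly
below it in Bruhat order with either `inv w' = inv w - 1` (case (i)) or, via an intermediate
element `s`, `inv w' = inv s - 1 = inv w - 2` (case (ii)); in both cases
`ℓ_θ(w') = ℓ_θ(w) - 1`. -/
theorem involution_descent {n : ℕ} (w : Equiv.Perm (Fin n)) (hw : w * w = 1) (hne : w ≠ 1) :
    (∃ w' : Equiv.Perm (Fin n), w' * w' = 1 ∧ bruhatLT w' w ∧
      invNum w' + 1 = invNum w ∧ thetaLength w' + 1 = thetaLength w) ∨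
    (∃ w' s : Equiv.Perm (Fin n), w' * w' = 1 ∧ bruhatLT w' s ∧ bruhatLT s w ∧
      invNum w' + 1 = invNum s ∧ invNum w' + 2 = invNum w ∧
      thetaLength w' + 1 = thetaLength w) := by
  obtain ⟨i, j, hij, hdesc⟩ := exists_adjacent_descent hne
  have hlt : i < j := Fin.lt_def.2 (by omega)
  have hww (a : Fin n) : w (w a) = a := by rw [← Perm.mul_apply, hw, Perm.one_apply]
  have hinv₁ := invNum_mul_swap_add_one hij hdesc
  have hlt₁ := bruhatLT_of_bruhatLE_of_invNum_add_one (bruhatLE_mul_swap hlt hdesc) hinv₁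
  by_cases hwi : w i = j
  · have hwj : w j = i := by rw [← hwi, hww]
    have hexc := excNum_mul_swap_add_one hlt hwi hwj
    have hcomm : Commute w (swap i j) := by
      rw [Commute, SemiconjBy, mul_swap_eq_swap_mul, hwi, hwj, swap_comm]
    refine .inl ⟨w * swap i j, ?_, hlt₁, hinv₁, by unfold thetaLength; omega⟩
    rw [← pow_two, hcomm.mul_pow, pow_two, hw, pow_two, swap_mul_self, one_mul]
  · have hwj : w j ≠ i := fun h => hwi (by rw [← h, hww])
    have hdesc₂ : (w * swap i j)⁻¹ j < (w * swap i j)⁻¹ i := by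
      rw [mul_inv_rev, swap_inv, inv_eq_of_mul_eq_one_right hw, Perm.mul_apply, Perm.mul_apply,
        swap_apply_lt_swap_apply_iff hij (fun h => hwi h.2)
          (fun h => hlt.not_gt (h.1 ▸ h.2 ▸ hdesc))]
      exact hdesc
    have hinv₂ := invNum_swap_mul_add_one hij hdesc₂
    have hexc := excNum_swap_mul_mul_swap hij hwi hwj
    refine .inr ⟨swap i j * (w * swap i j), w * swap i j, ?_,
      bruhatLT_of_bruhatLE_of_invNum_add_one (bruhatLE_swap_mul hlt hdesc₂) hinv₂, hlt₁, hinv₂,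
      by omega, by unfold thetaLength; omega⟩
    simp only [mul_assoc, swap_mul_self_mul]
    rw [← mul_assoc w w, hw, one_mul, swap_mul_self]
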